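/- arXiv:2603.19740 — 3 statements merged into one kernel-verified Lean document; each statement's English description precedes it below -/
import Mathlib

section
/- Let A be a real symmetric positive semidefinite N×N matrix (N ≥ 3) and let v ∈ ℝ^N. Set B := tr(A)·A − A². Then (1/3)‖v‖²·(2·tr(B·A) − tr(B)·tr(A)) ≤ 2⟨A v, B v⟩ − ⟨A v, v⟩·tr(B), where ⟨·,·⟩ is the Euclidean inner product on ℝ^N and ‖·‖ the Euclidean norm. -/
/-!
Diagonalize `A = U D Uᵀ` with `U` orthogonal and `D = diagonal d`, `d ≥ 0`. Both sides of the
inequality are invariant under `(A, v) ↦ (U A Uᵀ, U v)`, so we may take `A = D`. Then, writing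
`pₖ = ∑ dⱼ ^ k`, the left side is `‖v‖²` times `(2 tr(BA) - tr B tr A) / 3 = -2 e₃(d)` and the right
side is `∑ vᵢ² · (-2 dᵢ e₂(d without dᵢ))`. Since `e₃(d) = dᵢ e₂(d without dᵢ) + e₃(d without dᵢ)`,
the inequality is the weighted sum over `i` of `e₃(d without dᵢ) ≥ 0`.
-/

open Matrix Finset Unitary

section ElementarySymmetric

variable {ι : Type*}

/-- Six times the third elementary symmetric polynomial of `μ` over `s`, expressed through power
sums by Newton's identities. -/
def sixEsymmThree (s : Finset ι) (μ : ι → ℝ) : ℝ :=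
  (∑ i ∈ s, μ i) ^ 3 - 3 * (∑ i ∈ s, μ i) * (∑ i ∈ s, μ i ^ 2) + 2 * ∑ i ∈ s, μ i ^ 3

lemma sixEsymmThree_nonneg (s : Finset ι) {μ : ι → ℝ} (hμ : ∀ i ∈ s, 0 ≤ μ i) :
    0 ≤ sixEsymmThree s μ := by
  induction s using Finset.cons_induction with
  | empty => simp [sixEsymmThree]
  | cons a s _ ih =>
    rw [sixEsymmThree] at ih ⊢
    simp only [sum_cons]
    have ha' : 0 ≤ μ a := hμ a (mem_cons_self a s)
    have hs : ∀ i ∈ s, 0 ≤ μ i := fun i hi => hμ i (mem_cons_of_mem hi)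
    have hsq : ∑ i ∈ s, μ i ^ 2 ≤ (∑ i ∈ s, μ i) ^ 2 := sum_sq_le_sq_sum_of_nonneg hs
    nlinarith [ih hs, mul_nonneg ha' (sub_nonneg.2 hsq)]

variable [Fintype ι] [DecidableEq ι]

/-- The case `A = diagonal d`, `v = Pi.single i 1` of the theorem: the difference of the two
sides is `sixEsymmThree (univ.erase i) d / 3`. -/
lemma sharp_inequality_diagonal_single (d : ι → ℝ) (hd : ∀ j, 0 ≤ d j) (i : ι) :
    (2 * ((∑ j, d j) * (∑ j, d j ^ 2) - ∑ j, d j ^ 3) - ((∑ j, d j) ^ 2 - ∑ j, d j ^ 2) * ∑ j, d j) / 3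
      ≤ 2 * ((∑ j, d j) * d i ^ 2 - d i ^ 3) - d i * ((∑ j, d j) ^ 2 - ∑ j, d j ^ 2) := by
  have h := sixEsymmThree_nonneg (univ.erase i) (μ := d) fun j _ => hd j
  rw [sixEsymmThree, sum_erase_eq_sub (mem_univ i),
    sum_erase_eq_sub (f := fun j => d j ^ 2) (mem_univ i),
    sum_erase_eq_sub (f := fun j => d j ^ 3) (mem_univ i)] at h
  linear_combination h / 3

end ElementarySymmetric

section SharpInequality

variable {n : Type*} [Fintype n]

noncomputable def sharpLower (A : Matrix n n ℝ) (v : n → ℝ) : ℝ :=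
  (1 / 3) * (v ⬝ᵥ v) *
    (2 * ((A.trace • A - A * A) * A).trace - (A.trace • A - A * A).trace * A.trace)

noncomputable def sharpUpper (A : Matrix n n ℝ) (v : n → ℝ) : ℝ :=
  2 * ((A *ᵥ v) ⬝ᵥ ((A.trace • A - A * A) *ᵥ v)) - ((A *ᵥ v) ⬝ᵥ v) * (A.trace • A - A * A).trace

variable [DecidableEq n]

lemma sharpLower_diagonal_le_sharpUpper_diagonal (d w : n → ℝ) (hd : ∀ i, 0 ≤ d i) :
    sharpLower (diagonal d) w ≤ sharpUpper (diagonal d) w := by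
  set p₁ := ∑ j, d j
  set p₂ := ∑ j, d j ^ 2
  set p₃ := ∑ j, d j ^ 3
  have hB : (diagonal d).trace • diagonal d - diagonal d * diagonal d
      = diagonal fun i => p₁ * d i - d i ^ 2 := by
    rw [trace_diagonal, ← diagonal_smul, diagonal_mul_diagonal, diagonal_sub]
    simp only [Pi.smul_apply, smul_eq_mul, sq]
    rfl
  have htrB : ∑ i, (p₁ * d i - d i ^ 2) = p₁ ^ 2 - p₂ := by
    rw [sum_sub_distrib, ← mul_sum, sq]
  have htrBA : ∑ i, (p₁ * d i - d i ^ 2) * d i = p₁ * p₂ - p₃ := by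
    have h : ∀ i, (p₁ * d i - d i ^ 2) * d i = p₁ * d i ^ 2 - d i ^ 3 := fun i => by ring
    rw [sum_congr rfl fun i _ => h i, sum_sub_distrib, ← mul_sum]
  rw [sharpLower, sharpUpper, hB]
  simp only [diagonal_mul_diagonal, trace_diagonal, mulVec_diagonal, dotProduct, htrB, htrBA]
  calc 1 / 3 * (∑ i, w i * w i) * (2 * (p₁ * p₂ - p₃) - (p₁ ^ 2 - p₂) * p₁)
      = ∑ i, w i * w i * ((2 * (p₁ * p₂ - p₃) - (p₁ ^ 2 - p₂) * p₁) / 3) := by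
        rw [← sum_mul]; ring
    _ ≤ ∑ i, w i * w i * (2 * (p₁ * d i ^ 2 - d i ^ 3) - d i * (p₁ ^ 2 - p₂)) :=
        sum_le_sum fun i _ => mul_le_mul_of_nonneg_left
          (sharp_inequality_diagonal_single d hd i) (mul_self_nonneg _)
    _ = _ := by
        simp only [mul_sum, sum_mul, ← sum_sub_distrib]
        exact sum_congr rfl fun i _ => by ring

section Conjugation

variable {R : Type*} [CommSemiring R] [StarRing R] (u : unitary (Matrix n n R))

lemma trace_conjStarAlgAut (M : Matrix n n R) : (conjStarAlgAut R _ u M).trace = M.trace := by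
  rw [conjStarAlgAut_apply, trace_mul_cycle, coe_star_mul_self, one_mul]

lemma conjStarAlgAut_mulVec_mulVec (M : Matrix n n R) (x : n → R) :
    conjStarAlgAut R _ u M *ᵥ ((u : Matrix n n R) *ᵥ x) = (u : Matrix n n R) *ᵥ (M *ᵥ x) := by
  simp only [conjStarAlgAut_apply, mulVec_mulVec, mul_assoc, coe_star_mul_self, mul_one]

lemma unitary_mulVec_dotProduct_mulVec [TrivialStar R] (x y : n → R) :
    ((u : Matrix n n R) *ᵥ x) ⬝ᵥ ((u : Matrix n n R) *ᵥ y) = x ⬝ᵥ y := by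
  rw [dotProduct_mulVec, vecMul_mulVec, ← conjTranspose_eq_transpose_of_trivial,
    ← star_eq_conjTranspose, coe_star_mul_self, vecMul_one]

end Conjugation

variable (u : unitary (Matrix n n ℝ)) (A : Matrix n n ℝ) (x : n → ℝ)

lemma trace_smul_sub_mul_self_conjStarAlgAut :
    (conjStarAlgAut ℝ _ u A).trace • conjStarAlgAut ℝ _ u A
        - conjStarAlgAut ℝ _ u A * conjStarAlgAut ℝ _ u A
      = conjStarAlgAut ℝ _ u (A.trace • A - A * A) := by
  simp only [trace_conjStarAlgAut, map_sub, map_smul, map_mul]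

lemma sharpLower_conjStarAlgAut :
    sharpLower (conjStarAlgAut ℝ _ u A) ((u : Matrix n n ℝ) *ᵥ x) = sharpLower A x := by
  rw [sharpLower, sharpLower, trace_smul_sub_mul_self_conjStarAlgAut, ← map_mul]
  simp only [trace_conjStarAlgAut, unitary_mulVec_dotProduct_mulVec]

lemma sharpUpper_conjStarAlgAut :
    sharpUpper (conjStarAlgAut ℝ _ u A) ((u : Matrix n n ℝ) *ᵥ x) = sharpUpper A x := by
  rw [sharpUpper, sharpUpper, trace_smul_sub_mul_self_conjStarAlgAut]
  simp only [trace_conjStarAlgAut, conjStarAlgAut_mulVec_mulVec, unitary_mulVec_dotProduct_mulVec]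

end SharpInequality

theorem sharp_matrix_inequality_posSemidef_general {N : ℕ}
    (A : Matrix (Fin N) (Fin N) ℝ) (hA : A.PosSemidef) (v : Fin N → ℝ) :
    (1 / 3) * (v ⬝ᵥ v) *
        (2 * ((A.trace • A - A * A) * A).trace
          - (A.trace • A - A * A).trace * A.trace)
      ≤ 2 * ((A *ᵥ v) ⬝ᵥ ((A.trace • A - A * A) *ᵥ v))
          - ((A *ᵥ v) ⬝ᵥ v) * (A.trace • A - A * A).trace := by
  set u := hA.1.eigenvectorUnitary
  have hA_eq : A = conjStarAlgAut ℝ _ u (diagonal hA.1.eigenvalues) := by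
    simpa using hA.1.spectral_theorem
  have hv : v = (u : Matrix (Fin N) (Fin N) ℝ) *ᵥ (star u *ᵥ v) := by
    simp [mulVec_mulVec]
  change sharpLower A v ≤ sharpUpper A v
  rw [hA_eq, hv, sharpLower_conjStarAlgAut, sharpUpper_conjStarAlgAut]
  exact sharpLower_diagonal_le_sharpUpper_diagonal _ _ hA.eigenvalues_nonneg

/-- For a real symmetric positive semidefinite `N × N` matrix `A` (`N ≥ 3`)
and `v ∈ ℝ^N`, with `B := tr(A) • A - A²`, one has
`(1/3)‖v‖² (2 tr(BA) - tr(B) tr(A)) ≤ 2 ⟨Av, Bv⟩ - ⟨Av, v⟩ tr(B)`. -/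
theorem sharp_matrix_inequality_posSemidef {N : ℕ} (hN : 3 ≤ N)
    (A : Matrix (Fin N) (Fin N) ℝ) (hA : A.PosSemidef) (v : Fin N → ℝ) :
    (1 / 3) * (v ⬝ᵥ v) *
        (2 * ((A.trace • A - A * A) * A).trace
          - (A.trace • A - A * A).trace * A.trace)
      ≤ 2 * ((A *ᵥ v) ⬝ᵥ ((A.trace • A - A * A) *ᵥ v))
          - ((A *ᵥ v) ⬝ᵥ v) * (A.trace • A - A * A).trace :=
  sharp_matrix_inequality_posSemidef_general A hA v
end

section
/- Let A be a real symmetric negative semidefinite N×N matrix (N ≥ 3) and let v ∈ ℝ^N. Set B := tr(A)·A − A². Then (1/3)‖v‖²·(2·tr(B·A) − tr(B)·tr(A)) ≥ 2⟨A v, B v⟩ − ⟨A v, v⟩·tr(B). -/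
/-!
Let `μ₁, …, μ_N ≤ 0` be the eigenvalues of `A` and `c = tr A = ∑ μᵢ`. Since `B` is a polynomial
in `A`, the left side minus the right side is the quadratic form `⟨v, q(A) v⟩` of the cubic
`q(x) = K/3 - 2x(cx - x²) + tr(B) x`, where `K = 2 tr(BA) - tr(B) tr(A)`, so it suffices that
`q(μⱼ) ≥ 0` for every `j`. Writing `pₖ` for the power sums of the eigenvalues,
`K = -(p₁³ - 3p₁p₂ + 2p₃) = -6e₃(μ)` and `3q(μⱼ) = -6e₃(μ without μⱼ)`, which is nonnegative
because a product of three nonpositive numbers is nonpositive.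
-/

open Matrix Polynomial Finset
open scoped MatrixOrder ComplexOrder

theorem Finset.three_mul_sum_mul_sum_sq_le {ι : Type*} (s : Finset ι) (f : ι → ℝ)
    (hf : ∀ i ∈ s, 0 ≤ f i) :
    3 * (∑ i ∈ s, f i) * (∑ i ∈ s, f i ^ 2) ≤ (∑ i ∈ s, f i) ^ 3 + 2 * ∑ i ∈ s, f i ^ 3 := by
  induction s using Finset.cons_induction with
  | empty => simp
  | cons a s ha ih =>
    rw [forall_mem_cons] at hf
    have hsq : ∑ i ∈ s, f i ^ 2 ≤ (∑ i ∈ s, f i) ^ 2 := sum_sq_le_sq_sum_of_nonneg hf.2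
    simp only [sum_cons]
    nlinarith [ih hf.2, mul_nonneg hf.1 (sub_nonneg.2 hsq)]

theorem power_sum_cubic_le_of_nonpos {ι : Type*} [Fintype ι] [DecidableEq ι] (μ : ι → ℝ)
    (hμ : ∀ i, μ i ≤ 0) (j : ι) :
    (∑ i, μ i) ^ 3 - 3 * (∑ i, μ i) * (∑ i, μ i ^ 2) + 2 * ∑ i, μ i ^ 3
      ≤ 3 * (μ j * (∑ i, μ i) ^ 2 - 2 * (∑ i, μ i) * μ j ^ 2 + 2 * μ j ^ 3
        - μ j * ∑ i, μ i ^ 2) := by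
  have h := (univ.erase j).three_mul_sum_mul_sum_sq_le (fun i ↦ -μ i)
    (fun i _ ↦ neg_nonneg.2 (hμ i))
  simp only [sum_neg_distrib, neg_sq, Odd.neg_pow (by decide : Odd 3)] at h
  rw [sum_erase_eq_sub (mem_univ j), sum_erase_eq_sub (mem_univ j),
    sum_erase_eq_sub (mem_univ j)] at h
  linear_combination h

namespace Matrix.IsHermitian

theorem mulVec_dotProduct {n : Type*} [Fintype n] {A : Matrix n n ℝ} (hA : A.IsHermitian)
    (x y : n → ℝ) :
    (A *ᵥ x) ⬝ᵥ y = x ⬝ᵥ (A *ᵥ y) := by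
  rw [dotProduct_mulVec, ← mulVec_transpose, ← conjTranspose_eq_transpose_of_trivial, hA.eq]

variable {𝕜 n : Type*} [RCLike 𝕜] [Fintype n] [DecidableEq n] {A : Matrix n n 𝕜}

theorem trace_cfc (hA : A.IsHermitian) (f : ℝ → ℝ) :
    (cfc f A).trace = ∑ i, (f (hA.eigenvalues i) : 𝕜) := by
  rw [hA.cfc_eq, IsHermitian.cfc, Unitary.conjStarAlgAut_apply, trace_mul_cycle,
    Unitary.coe_star_mul_self, one_mul, trace_diagonal]
  rfl

theorem trace_pow (hA : A.IsHermitian) (k : ℕ) :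
    (A ^ k).trace = ∑ i, (hA.eigenvalues i : 𝕜) ^ k := by
  rw [← cfc_pow_id (R := ℝ) A k hA.isSelfAdjoint, hA.trace_cfc]
  push_cast
  rfl

theorem posSemidef_aeval (hA : A.IsHermitian) (p : ℝ[X])
    (hp : ∀ i, 0 ≤ p.eval (hA.eigenvalues i)) : (aeval A p).PosSemidef := by
  rw [← cfc_polynomial p A, ← nonneg_iff_posSemidef]
  refine cfc_nonneg fun x hx ↦ ?_
  obtain ⟨i, rfl⟩ := hA.spectrum_real_eq_range_eigenvalues ▸ hx
  exact hp i

theorem eigenvalues_nonpos (hA : A.IsHermitian) (hneg : (-A).PosSemidef) (i : n) :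
    hA.eigenvalues i ≤ 0 := by
  have hmem : -hA.eigenvalues i ∈ spectrum ℝ (-A) := by
    rw [← spectrum.neg_eq]
    exact Set.neg_mem_neg.2 (hA.eigenvalues_mem_spectrum_real i)
  exact neg_nonneg.1 (spectrum_nonneg_of_nonneg (nonneg_iff_posSemidef.2 hneg) hmem)

end Matrix.IsHermitian

theorem sharp_matrix_inequality_negSemidef_general {N : ℕ}
    (A : Matrix (Fin N) (Fin N) ℝ) (hA : (-A).PosSemidef) (v : Fin N → ℝ) :
    (1 / 3) * (v ⬝ᵥ v) *
        (2 * ((A.trace • A - A * A) * A).trace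
          - (A.trace • A - A * A).trace * A.trace)
      ≥ 2 * ((A *ᵥ v) ⬝ᵥ ((A.trace • A - A * A) *ᵥ v))
          - ((A *ᵥ v) ⬝ᵥ v) * (A.trace • A - A * A).trace := by
  have hAh : A.IsHermitian := by simpa using hA.1.neg
  set μ := hAh.eigenvalues
  set c := A.trace with hc_def
  set B := c • A - A * A
  have hc : c = ∑ i, μ i := by simpa using hAh.trace_eq_sum_eigenvalues
  have htrB : B.trace = c ^ 2 - ∑ i, μ i ^ 2 := by
    simp [B, ← sq, hAh.trace_pow, ← hc_def]
    ring
  have htrBA : (B * A).trace = c * ∑ i, μ i ^ 2 - ∑ i, μ i ^ 3 := by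
    simp [B, sub_mul, ← sq, ← pow_succ, hAh.trace_pow]
    rfl
  set K := 2 * (B * A).trace - B.trace * c
  set q : ℝ[X] := C (K / 3) - C 2 * X * (C c * X - X ^ 2) + C B.trace * X
  have hq : ∀ i, 0 ≤ q.eval (μ i) := fun i ↦ by
    have := power_sum_cubic_le_of_nonpos μ (hAh.eigenvalues_nonpos hA) i
    simp only [q, K, htrB, htrBA, hc, eval_add, eval_sub, eval_mul, eval_C, eval_X, eval_pow]
    linarith
  have hqA : aeval A q = (K / 3) • 1 - (2 : ℝ) • (A * B) + B.trace • A := by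
    have hB : aeval A (C c * X - X ^ 2) = B := by simp [B, Algebra.smul_def, sq]
    simp only [q, map_add, map_sub, map_mul, aeval_C, aeval_X, hB]
    simp [Algebra.algebraMap_eq_smul_one]
  have hquad : (1 / 3) * (v ⬝ᵥ v) * K
      - (2 * ((A *ᵥ v) ⬝ᵥ (B *ᵥ v)) - ((A *ᵥ v) ⬝ᵥ v) * B.trace) = v ⬝ᵥ (aeval A q *ᵥ v) := by
    simp only [hqA, hAh.mulVec_dotProduct, add_mulVec, sub_mulVec, smul_mulVec, one_mulVec,
      ← mulVec_mulVec, dotProduct_add, dotProduct_sub, dotProduct_smul, smul_eq_mul]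
    ring
  have hpos := (hAh.posSemidef_aeval q hq).dotProduct_mulVec_nonneg v
  rw [star_trivial] at hpos
  linarith

/-- For a real symmetric negative semidefinite `N × N` matrix `A` (`N ≥ 3`)
and `v ∈ ℝ^N`, with `B := tr(A) • A - A²`, one has
`(1/3)‖v‖² (2 tr(BA) - tr(B) tr(A)) ≥ 2 ⟨Av, Bv⟩ - ⟨Av, v⟩ tr(B)`. -/
theorem sharp_matrix_inequality_negSemidef {N : ℕ} (hN : 3 ≤ N)
    (A : Matrix (Fin N) (Fin N) ℝ) (hA : (-A).PosSemidef) (v : Fin N → ℝ) :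
    (1 / 3) * (v ⬝ᵥ v) *
        (2 * ((A.trace • A - A * A) * A).trace
          - (A.trace • A - A * A).trace * A.trace)
      ≥ 2 * ((A *ᵥ v) ⬝ᵥ ((A.trace • A - A * A) *ᵥ v))
          - ((A *ᵥ v) ⬝ᵥ v) * (A.trace • A - A * A).trace :=
  sharp_matrix_inequality_negSemidef_general A hA v
end

section
/- Let N ≥ 3, let D = diag(λ₁,…,λ_N) be a real diagonal N×N matrix, let w ∈ ℝ^N, and set B := tr(D)·D − D². Then [2⟨D w, B w⟩ − ⟨D w, w⟩·tr(B)] − (1/3)‖w‖²·(2·tr(B·D) − tr(B)·tr(D)) = 2·Σ_{k=1}^N w_k²·S₃^{(k)}(λ), where S₃^{(k)}(λ) denotes the third elementary symmetric function of the (N−1)-tuple (λ₁,…,λ_{k−1},λ_{k+1},…,λ_N) when N ≥ 4, and S₃^{(k)}(λ) := 0 when N = 3. -/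
/-!
For diagonal `D` every term is a sum over `k` of `w_k²` times a polynomial in `λ`, so the identity
reduces to one between the coefficients of `w_k²`. Writing `p_j = Σ λ_i^j`, that coefficient
identity is Newton's formula `6 e₃ = p₁³ - 3 p₁ p₂ + 2 p₃` for the tuple with `λ_k` omitted, whose
power sums are `p_j - λ_k^j`. For `N = 3` that tuple has two entries and `e₃` of it vanishes, which
matches the convention `S₃^{(k)} = 0`.
-/

open Matrix

/-- The third elementary symmetric function of the `(N-1)`-tuple obtained from
`λ₁, …, λ_N` by omitting `λ_k`; by convention it is `0` when `N = 3`. -/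
noncomputable def S3omit {N : ℕ} (lam : Fin N → ℝ) (k : Fin N) : ℝ :=
  if N = 3 then 0
  else ∑ t ∈ (Finset.univ.erase k).powersetCard 3, ∏ i ∈ t, lam i

namespace Multiset

variable {R : Type*} [CommRing R]

theorem esymm_cons_succ (a : R) (s : Multiset R) (n : ℕ) :
    (a ::ₘ s).esymm (n + 1) = s.esymm (n + 1) + a * s.esymm n := by
  simp [esymm, map_map, sum_map_mul_left]

theorem esymm_zero_right (s : Multiset R) : s.esymm 0 = 1 := by
  simp [esymm]

theorem esymm_one_right (s : Multiset R) : s.esymm 1 = s.sum := by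
  induction s using Multiset.induction_on with
  | empty => rfl
  | cons a s ih => rw [esymm_cons_succ, ih, esymm_zero_right, sum_cons]; ring

theorem two_mul_esymm_two (s : Multiset R) :
    2 * s.esymm 2 = s.sum ^ 2 - (s.map (· ^ 2)).sum := by
  induction s using Multiset.induction_on with
  | empty => simp [esymm, powersetCard_zero_right]
  | cons a s ih =>
    rw [esymm_cons_succ, esymm_one_right, sum_cons, map_cons, sum_cons]
    linear_combination ih

theorem six_mul_esymm_three (s : Multiset R) :
    6 * s.esymm 3 = s.sum ^ 3 - 3 * s.sum * (s.map (· ^ 2)).sum + 2 * (s.map (· ^ 3)).sum := by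
  induction s using Multiset.induction_on with
  | empty => simp [esymm, powersetCard_zero_right]
  | cons a s ih =>
    rw [esymm_cons_succ, sum_cons, map_cons, sum_cons, map_cons, sum_cons]
    linear_combination ih + 3 * a * two_mul_esymm_two s

end Multiset

theorem S3omit_eq_esymm {N : ℕ} (lam : Fin N → ℝ) (k : Fin N) :
    S3omit lam k = ((Finset.univ.erase k).val.map lam).esymm 3 := by
  rw [Finset.esymm_map_val, S3omit, ite_eq_right_iff]
  intro hN
  rw [eq_comm, Finset.powersetCard_eq_empty.2 (by simp [Finset.card_erase_of_mem, hN]),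
    Finset.sum_empty]

theorem six_mul_S3omit {N : ℕ} (lam : Fin N → ℝ) (k : Fin N) :
    6 * S3omit lam k = (∑ i, lam i - lam k) ^ 3
      - 3 * (∑ i, lam i - lam k) * (∑ i, lam i ^ 2 - lam k ^ 2)
      + 2 * (∑ i, lam i ^ 3 - lam k ^ 3) := by
  simp only [S3omit_eq_esymm, Multiset.six_mul_esymm_three, Multiset.map_map, Function.comp_def,
    Finset.sum_map_val, Finset.sum_erase_eq_sub (Finset.mem_univ k)]

theorem Matrix.trace_smul_sub_mul_self_diagonal {n R : Type*} [Fintype n] [DecidableEq n]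
    [CommRing R] (d : n → R) :
    (diagonal d).trace • diagonal d - diagonal d * diagonal d
      = diagonal fun i => (∑ j, d j) * d i - d i ^ 2 := by
  rw [trace_diagonal, diagonal_mul_diagonal, ← diagonal_smul, ← diagonal_sub]
  congr 1
  funext i
  simp [sq]

theorem diagonal_difference_identity_general {N : ℕ}
    (lam : Fin N → ℝ) (w : Fin N → ℝ) :
    (2 * ((Matrix.diagonal lam *ᵥ w) ⬝ᵥ
            (((Matrix.diagonal lam).trace • Matrix.diagonal lam
              - Matrix.diagonal lam * Matrix.diagonal lam) *ᵥ w))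
        - ((Matrix.diagonal lam *ᵥ w) ⬝ᵥ w) *
            ((Matrix.diagonal lam).trace • Matrix.diagonal lam
              - Matrix.diagonal lam * Matrix.diagonal lam).trace)
      - (1 / 3) * (w ⬝ᵥ w) *
          (2 * ((((Matrix.diagonal lam).trace • Matrix.diagonal lam
                  - Matrix.diagonal lam * Matrix.diagonal lam) * Matrix.diagonal lam).trace)
            - ((Matrix.diagonal lam).trace • Matrix.diagonal lam
                - Matrix.diagonal lam * Matrix.diagonal lam).trace * (Matrix.diagonal lam).trace)
      = 2 * ∑ k, w k ^ 2 * S3omit lam k := by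
  rw [trace_smul_sub_mul_self_diagonal]
  simp only [trace_diagonal, diagonal_mul_diagonal, mulVec_diagonal, dotProduct]
  have trace_B : ∑ i, ((∑ j, lam j) * lam i - lam i ^ 2) = (∑ i, lam i) ^ 2 - ∑ i, lam i ^ 2 := by
    rw [Finset.sum_sub_distrib, ← Finset.mul_sum, sq]
  have trace_BD : ∑ i, ((∑ j, lam j) * lam i - lam i ^ 2) * lam i
      = (∑ i, lam i) * ∑ i, lam i ^ 2 - ∑ i, lam i ^ 3 := by
    simp only [sub_mul, Finset.sum_sub_distrib, mul_assoc, ← Finset.mul_sum, ← sq, ← pow_succ]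
  rw [trace_B, trace_BD]
  have coeff := six_mul_S3omit lam
  -- abbreviating the power sums keeps the distribution over `∑ k` below from expanding them
  set p₁ := ∑ i, lam i
  set p₂ := ∑ i, lam i ^ 2
  set p₃ := ∑ i, lam i ^ 3
  simp only [Finset.mul_sum, Finset.sum_mul, ← Finset.sum_sub_distrib]
  refine Finset.sum_congr rfl fun k _ => ?_
  linear_combination (-(w k ^ 2) / 3) * coeff k

/-- For `N ≥ 3`, a real diagonal matrix `D = diag(λ₁,…,λ_N)`, `w ∈ ℝ^N`
and `B := tr(D) • D - D²`, one has
`[2⟨Dw, Bw⟩ - ⟨Dw, w⟩ tr(B)] - (1/3)‖w‖² (2 tr(BD) - tr(B) tr(D)) = 2 Σ_k w_k² S₃^{(k)}(λ)`. -/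
theorem diagonal_difference_identity {N : ℕ} (hN : 3 ≤ N)
    (lam : Fin N → ℝ) (w : Fin N → ℝ) :
    (2 * ((Matrix.diagonal lam *ᵥ w) ⬝ᵥ
            (((Matrix.diagonal lam).trace • Matrix.diagonal lam
              - Matrix.diagonal lam * Matrix.diagonal lam) *ᵥ w))
        - ((Matrix.diagonal lam *ᵥ w) ⬝ᵥ w) *
            ((Matrix.diagonal lam).trace • Matrix.diagonal lam
              - Matrix.diagonal lam * Matrix.diagonal lam).trace)
      - (1 / 3) * (w ⬝ᵥ w) *
          (2 * ((((Matrix.diagonal lam).trace • Matrix.diagonal lam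
                  - Matrix.diagonal lam * Matrix.diagonal lam) * Matrix.diagonal lam).trace)
            - ((Matrix.diagonal lam).trace • Matrix.diagonal lam
                - Matrix.diagonal lam * Matrix.diagonal lam).trace * (Matrix.diagonal lam).trace)
      = 2 * ∑ k, w k ^ 2 * S3omit lam k :=
  diagonal_difference_identity_general lam w
end
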